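/- If {A,B} is a minimum bisection with organized partition {A₁,A₂,B₁,B₂}, then D_C ≥ 0, i.e., E(A₁,A₂) + E(B₁,B₂) ≥ E(A₁,B₁) + E(A₂,B₂). -/

import Mathlib

open Finset

/-- Number of edges of `G` with one endpoint in `X` and the other in `Y`
(for disjoint `X`, `Y`). -/
def EC {V : Type*} [Fintype V] [DecidableEq V] (G : SimpleGraph V)
    [DecidableRel G.Adj] (X Y : Finset V) : ℕ :=
  ((X ×ˢ Y).filter (fun p => G.Adj p.1 p.2)).card

/-- `{R, S}` is a bisection of the vertex set. -/
def IsBisection {V : Type*} [Fintype V] [DecidableEq V] (R S : Finset V) : Prop :=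
  R ∪ S = Finset.univ ∧ Disjoint R S ∧ R.card = S.card

/-! Comparing the minimum bisection `{A₁ ∪ A₂, B₁ ∪ B₂}` with the bisection
`{A₁ ∪ B₁, A₂ ∪ B₂}`: the cross edges `A₁B₂` and `A₂B₁` are cut by both, so minimality
leaves `E(A₁,B₁) + E(A₂,B₂) ≤ E(A₁,A₂) + E(B₁,B₂)`. -/

section EdgeCount

variable {V : Type*} [Fintype V] [DecidableEq V] (G : SimpleGraph V) [DecidableRel G.Adj]

lemma EC_union_left {X X' : Finset V} (Y : Finset V) (h : Disjoint X X') :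
    EC G (X ∪ X') Y = EC G X Y + EC G X' Y := by
  unfold EC
  rw [union_product, filter_union, card_union_of_disjoint]
  exact disjoint_filter_filter (disjoint_product.2 (Or.inl h))

lemma EC_union_right (X : Finset V) {Y Y' : Finset V} (h : Disjoint Y Y') :
    EC G X (Y ∪ Y') = EC G X Y + EC G X Y' := by
  unfold EC
  rw [product_union, filter_union, card_union_of_disjoint]
  exact disjoint_filter_filter (disjoint_product.2 (Or.inr h))

lemma EC_union_union {X X' Y Y' : Finset V} (hX : Disjoint X X') (hY : Disjoint Y Y') :
    EC G (X ∪ X') (Y ∪ Y') = EC G X Y + EC G X Y' + EC G X' Y + EC G X' Y' := by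
  rw [EC_union_left G _ hX, EC_union_right G _ hY, EC_union_right G _ hY]
  ring

lemma EC_comm (X Y : Finset V) : EC G X Y = EC G Y X := by
  unfold EC
  refine card_equiv (Equiv.prodComm V V) fun p => ?_
  simp [and_comm, G.adj_comm]

end EdgeCount

lemma IsBisection.swap_halves {V : Type*} [Fintype V] [DecidableEq V] {A₁ A₂ B₁ B₂ : Finset V}
    (hbis : IsBisection (A₁ ∪ A₂) (B₁ ∪ B₂)) (hA : Disjoint A₁ A₂) (hB : Disjoint B₁ B₂)
    (hcard : A₁.card + B₁.card = A₂.card + B₂.card) :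
    IsBisection (A₁ ∪ B₁) (A₂ ∪ B₂) := by
  obtain ⟨huniv, hAB, -⟩ := hbis
  simp only [disjoint_union_left, disjoint_union_right] at hAB
  refine ⟨?_, ?_, ?_⟩
  · rw [← huniv]; ac_rfl
  · simp only [disjoint_union_left, disjoint_union_right]
    exact ⟨⟨hA, hAB.1.2.symm⟩, hAB.2.1, hB⟩
  · rwa [card_union_of_disjoint hAB.1.1, card_union_of_disjoint hAB.2.2]

theorem stmt10_general {V : Type*} [Fintype V] [DecidableEq V] (G : SimpleGraph V)
    [DecidableRel G.Adj] (n : ℕ) (A B A₁ A₂ B₁ B₂ : Finset V)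
    (hbis : IsBisection A B)
    (hmin : ∀ R S : Finset V, IsBisection R S → EC G A B ≤ EC G R S)
    (hA : A = A₁ ∪ A₂) (hA12 : Disjoint A₁ A₂)
    (hB : B = B₁ ∪ B₂) (hB12 : Disjoint B₁ B₂)
    (hA1 : A₁.card = n) (hA2 : A₂.card = n) (hB1 : B₁.card = n) (hB2 : B₂.card = n) :
    EC G A₁ B₁ + EC G A₂ B₂ ≤ EC G A₁ A₂ + EC G B₁ B₂ := by
  subst hA hB
  have hswap : IsBisection (A₁ ∪ B₁) (A₂ ∪ B₂) :=
    hbis.swap_halves hA12 hB12 (by rw [hA1, hA2, hB1, hB2])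
  have hAB := hbis.2.1
  simp only [disjoint_union_left, disjoint_union_right] at hAB
  have hcut := hmin _ _ hswap
  rw [EC_union_union G hA12 hB12, EC_union_union G hAB.1.1 hAB.2.2, EC_comm G B₁ A₂] at hcut
  omega

theorem stmt10 {V : Type*} [Fintype V] [DecidableEq V] (G : SimpleGraph V)
    [DecidableRel G.Adj] (n : ℕ) (A B A₁ A₂ B₁ B₂ : Finset V)
    (hcard : Fintype.card V = 4 * n)
    (hbis : IsBisection A B) (hA2n : A.card = 2 * n)
    (hmin : ∀ R S : Finset V, IsBisection R S → EC G A B ≤ EC G R S)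
    (hA : A = A₁ ∪ A₂) (hA12 : Disjoint A₁ A₂)
    (hB : B = B₁ ∪ B₂) (hB12 : Disjoint B₁ B₂)
    (hA1 : A₁.card = n) (hA2 : A₂.card = n) (hB1 : B₁.card = n) (hB2 : B₂.card = n)
    (horg : ∀ A₁' A₂' B₁' B₂' : Finset V,
      A = A₁' ∪ A₂' → Disjoint A₁' A₂' → B = B₁' ∪ B₂' → Disjoint B₁' B₂' →
      A₁'.card = n → A₂'.card = n → B₁'.card = n → B₂'.card = n →
      (EC G A₁ A₂ + EC G B₁ B₂ : ℤ) - EC G A₁ B₁ - EC G A₂ B₂ ≤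
        (EC G A₁' A₂' + EC G B₁' B₂' : ℤ) - EC G A₁' B₁' - EC G A₂' B₂') :
    EC G A₁ B₁ + EC G A₂ B₂ ≤ EC G A₁ A₂ + EC G B₁ B₂ :=
  stmt10_general G n A B A₁ A₂ B₁ B₂ hbis hmin hA hA12 hB hB12 hA1 hA2 hB1 hB2
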